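/- Let Q be a half-open cube in ℝ^d with side length ℓ(Q) and boundary ∂Q. Then (1/|Q|) ∫_Q log(1/dist(x, ∂Q)) dx = log(1/ℓ(Q)) + C, where C = log 2 + (1 + 1/2 + ⋯ + 1/d) depends only on the dimension d. -/

import Mathlib

open MeasureTheory Metric

/-- A half-open axis-parallel cube in `ℝ^d`: `[a₁, a₁+l) × ⋯ × [a_d, a_d+l)`. -/
structure Cube (d : ℕ) where
  a : Fin d → ℝ
  l : ℝ
  l_pos : 0 < l

/-- The underlying point set of a cube. -/
def Cube.set {d : ℕ} (Q : Cube d) : Set (EuclideanSpace ℝ (Fin d)) :=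
  {x | ∀ i, Q.a i ≤ x i ∧ x i < Q.a i + Q.l}

/-- `Q` is a dyadic subcube of `R`: a member of `𝒟_j(R)` for some `j ≥ 0`. -/
def IsDyadicSubcube {d : ℕ} (R Q : Cube d) : Prop :=
  ∃ j : ℕ, ∃ k : Fin d → ℕ, (∀ i, k i < 2 ^ j) ∧ Q.l = R.l / 2 ^ j ∧
    ∀ i, Q.a i = R.a i + (k i : ℝ) * (R.l / 2 ^ j)

/-- `Q' ∈ ℱ(R,E)`: a maximal dyadic subcube of `R` avoiding `E`, i.e.
`Q' ∩ E = ∅` and its dyadic parent `πQ'` meets `E`. -/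
def IsMaxEmpty {d : ℕ} (R : Cube d) (E : Set (EuclideanSpace ℝ (Fin d))) (Q' : Cube d) : Prop :=
  IsDyadicSubcube R Q' ∧ Q'.set ∩ E = ∅ ∧
    ∃ P : Cube d, IsDyadicSubcube R P ∧ P.l = 2 * Q'.l ∧ Q'.set ⊆ P.set ∧ (P.set ∩ E).Nonempty

/-- `M = M(R)`: a largest dyadic subcube of `R` containing no point of `E`. -/
def IsLargestEmptyDyadic {d : ℕ} (R : Cube d) (E : Set (EuclideanSpace ℝ (Fin d)))
    (M : Cube d) : Prop :=
  IsDyadicSubcube R M ∧ M.set ∩ E = ∅ ∧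
    ∀ Q : Cube d, IsDyadicSubcube R Q → Q.set ∩ E = ∅ → Q.l ≤ M.l

/-- Weak porosity of `E ⊆ ℝ^d`. -/
def WeaklyPorous {d : ℕ} (E : Set (EuclideanSpace ℝ (Fin d))) : Prop :=
  ∃ c δ : ℝ, 0 < c ∧ c < 1 ∧ 0 < δ ∧ δ < 1 ∧
    ∀ R : Cube d, ∃ M : Cube d, IsLargestEmptyDyadic R E M ∧
      ∃ F : Finset (Cube d),
        (↑F : Set (Cube d)).Pairwise (fun Q Q' => Disjoint Q.set Q'.set) ∧
        (∀ Q ∈ F, IsDyadicSubcube R Q ∧ Q.set ∩ E = ∅ ∧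
          ENNReal.ofReal δ * volume M.set ≤ volume Q.set) ∧
        ENNReal.ofReal c * volume R.set ≤ ∑ Q ∈ F, volume Q.set

/-!
For `x` in the open cube, `dist(x, ∂Q) ≥ s` exactly when every coordinate of `x` is at distance
at least `s` from the two end points of its side, i.e. when `x` lies in the concentric closed cube
of side `ℓ - 2s`. So `g = log (ℓ / (2 dist(·, ∂Q)))` is nonnegative on the cube with
`|{g > t}| = ℓ^d (1 - (1 - e^{-t})^d)`, and the layer cake formula gives
`∫_Q g = ℓ^d ∫_0^∞ (1 - (1 - e^{-t})^d) dt = ℓ^d (1 + 1/2 + ⋯ + 1/d)`,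
since `∑_{k<d} (1 - e^{-t})^{k+1} / (k+1)` is a primitive of the integrand. It remains to write
`log (1 / dist(x, ∂Q)) = log (2 / ℓ) + g x`, the boundary of the convex set `Q` being null.
-/

open Set Real

namespace EuclideanSpace

variable {ι : Type*}

lemma setOf_forall_mem_eq_preimage_pi (s : ι → Set ℝ) :
    {x : EuclideanSpace ℝ ι | ∀ i, x i ∈ s i} = WithLp.ofLp ⁻¹' univ.pi s := by
  ext; simp

lemma closure_setOf_forall_mem (s : ι → Set ℝ) :
    closure {x : EuclideanSpace ℝ ι | ∀ i, x i ∈ s i}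
      = {x | ∀ i, x i ∈ closure (s i)} := by
  simp only [setOf_forall_mem_eq_preimage_pi, ← closure_pi_set]
  exact ((PiLp.homeomorph 2 _).preimage_closure _).symm

lemma convex_setOf_forall_mem {s : ι → Set ℝ} (hs : ∀ i, Convex ℝ (s i)) :
    Convex ℝ {x : EuclideanSpace ℝ ι | ∀ i, x i ∈ s i} := by
  rw [setOf_forall_mem_eq_preimage_pi]
  exact (convex_pi fun i _ => hs i).linear_preimage
    (WithLp.linearEquiv 2 ℝ (ι → ℝ)).toLinearMap

variable [Fintype ι]

lemma interior_setOf_forall_mem (s : ι → Set ℝ) :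
    interior {x : EuclideanSpace ℝ ι | ∀ i, x i ∈ s i}
      = {x | ∀ i, x i ∈ interior (s i)} := by
  simp only [setOf_forall_mem_eq_preimage_pi, ← interior_pi_set finite_univ]
  exact ((PiLp.homeomorph 2 _).preimage_interior _).symm

lemma measurableSet_setOf_forall_mem {s : ι → Set ℝ} (hs : ∀ i, MeasurableSet (s i)) :
    MeasurableSet {x : EuclideanSpace ℝ ι | ∀ i, x i ∈ s i} := by
  rw [setOf_forall_mem_eq_preimage_pi]
  exact (MeasurableSet.univ_pi hs).preimage (WithLp.measurable_ofLp 2 _)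

lemma volume_setOf_forall_mem (s : ι → Set ℝ) :
    volume {x : EuclideanSpace ℝ ι | ∀ i, x i ∈ s i} = ∏ i, volume (s i) := by
  rw [setOf_forall_mem_eq_preimage_pi, ← volume_pi_pi]
  exact (volume_preserving_symm_measurableEquiv_toLp ι).measure_preimage_equiv _

lemma dist_toLp_update [DecidableEq ι] (x : EuclideanSpace ℝ ι) (i : ι) (c : ℝ) :
    dist x (WithLp.toLp 2 (Function.update x.ofLp i c)) = |x i - c| := by
  rw [EuclideanSpace.dist_eq, Finset.sum_eq_single i]
  · simp [Real.dist_eq, Real.sqrt_sq_eq_abs]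
  · intro j _ hj
    simp [Function.update_of_ne hj]
  · simp

end EuclideanSpace

section ExpIntegral

open Filter Topology

lemma hasDerivAt_sum_one_sub_exp_neg_pow_div (n : ℕ) (t : ℝ) :
    HasDerivAt (fun t => ∑ k ∈ Finset.range n, (1 - exp (-t)) ^ (k + 1) / (k + 1))
      (1 - (1 - exp (-t)) ^ n) t := by
  have hterm (k : ℕ) : HasDerivAt (fun t => (1 - exp (-t)) ^ (k + 1) / (k + 1))
      ((1 - exp (-t)) ^ k * exp (-t)) t := by
    refine ((((hasDerivAt_neg t).exp.const_sub 1).pow (k + 1)).div_const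
      ((k : ℝ) + 1)).congr_deriv ?_
    rw [Nat.add_sub_cancel]
    push_cast
    field_simp
  refine (HasDerivAt.fun_sum fun k (_ : k ∈ Finset.range n) => hterm k).congr_deriv ?_
  rw [← Finset.sum_mul, ← geom_sum_mul_neg, sub_sub_cancel]

lemma one_sub_one_sub_exp_neg_pow_nonneg {t : ℝ} (ht : 0 ≤ t) (n : ℕ) :
    0 ≤ 1 - (1 - exp (-t)) ^ n :=
  sub_nonneg.mpr <| pow_le_one₀ (sub_nonneg.mpr (exp_le_one_iff.mpr (neg_nonpos.mpr ht)))
    (sub_le_self _ (exp_pos _).le)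

lemma tendsto_sum_one_sub_exp_neg_pow_div (n : ℕ) :
    Tendsto (fun t => ∑ k ∈ Finset.range n, (1 - exp (-t)) ^ (k + 1) / (k + 1)) atTop
      (𝓝 (∑ k ∈ Finset.range n, (1 : ℝ) / (k + 1))) := by
  refine tendsto_finsetSum _ fun k _ => ?_
  have h := (((tendsto_const_nhds (x := (1 : ℝ))).sub tendsto_exp_neg_atTop_nhds_zero).pow
    (k + 1)).div_const ((k : ℝ) + 1)
  simpa using h

lemma integrableOn_Ioi_one_sub_one_sub_exp_neg_pow (n : ℕ) :
    IntegrableOn (fun t => 1 - (1 - exp (-t)) ^ n) (Ioi 0) :=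
  integrableOn_Ioi_deriv_of_nonneg' (fun t _ => hasDerivAt_sum_one_sub_exp_neg_pow_div n t)
    (fun _ ht => one_sub_one_sub_exp_neg_pow_nonneg ht.le n)
    (tendsto_sum_one_sub_exp_neg_pow_div n)

lemma integral_Ioi_one_sub_one_sub_exp_neg_pow (n : ℕ) :
    ∫ t in Ioi 0, (1 - (1 - exp (-t)) ^ n) = ∑ k ∈ Finset.range n, (1 : ℝ) / (k + 1) := by
  rw [integral_Ioi_of_hasDerivAt_of_nonneg'
    (fun t _ => hasDerivAt_sum_one_sub_exp_neg_pow_div n t)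
    (fun _ ht => one_sub_one_sub_exp_neg_pow_nonneg ht.le n)
    (tendsto_sum_one_sub_exp_neg_pow_div n)]
  simp

end ExpIntegral

namespace Cube

variable {d : ℕ} (Q : Cube d) {x : EuclideanSpace ℝ (Fin d)}

lemma set_eq_setOf_forall_mem : Q.set = {x | ∀ i, x i ∈ Ico (Q.a i) (Q.a i + Q.l)} := rfl

lemma convex_set : Convex ℝ Q.set :=
  EuclideanSpace.convex_setOf_forall_mem fun _ => convex_Ico _ _

lemma closure_set : closure Q.set = {x | ∀ i, x i ∈ Icc (Q.a i) (Q.a i + Q.l)} := by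
  simp only [set_eq_setOf_forall_mem, EuclideanSpace.closure_setOf_forall_mem,
    closure_Ico (lt_add_of_pos_right _ Q.l_pos).ne]

lemma interior_set : interior Q.set = {x | ∀ i, x i ∈ Ioo (Q.a i) (Q.a i + Q.l)} := by
  simp only [set_eq_setOf_forall_mem, EuclideanSpace.interior_setOf_forall_mem, interior_Ico]

lemma volume_set : volume Q.set = ENNReal.ofReal (Q.l ^ d) := by
  rw [set_eq_setOf_forall_mem, EuclideanSpace.volume_setOf_forall_mem]
  simp [Real.volume_Ico, ← ENNReal.ofReal_pow Q.l_pos.le]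

lemma volume_frontier_set : volume (frontier Q.set) = 0 :=
  Q.convex_set.addHaar_frontier volume

lemma volume_interior_set : volume (interior Q.set) = ENNReal.ofReal (Q.l ^ d) := by
  rw [measure_interior_of_null_frontier Q.volume_frontier_set, volume_set]

lemma toLp_update_mem_frontier_set (hx : x ∈ Q.set) (i : Fin d) {c : ℝ}
    (hc : c = Q.a i ∨ c = Q.a i + Q.l) :
    WithLp.toLp 2 (Function.update x.ofLp i c) ∈ frontier Q.set := by
  have hl := Q.l_pos
  refine ⟨?_, ?_⟩
  · rw [closure_set]
    intro j
    rcases eq_or_ne j i with rfl | hj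
    · simp only [Function.update_self, mem_Icc]
      rcases hc with rfl | rfl <;> constructor <;> linarith
    · simpa [Function.update_of_ne hj] using Ico_subset_Icc_self (hx j)
  · rw [interior_set]
    intro h
    have := h i
    simp only [Function.update_self, mem_Ioo] at this
    rcases hc with rfl | rfl <;> linarith [this.1, this.2]

lemma infDist_frontier_le (hx : x ∈ Q.set) (i : Fin d) :
    infDist x (frontier Q.set) ≤ x i - Q.a i ∧
      infDist x (frontier Q.set) ≤ Q.a i + Q.l - x i := by
  obtain ⟨hx₁, hx₂⟩ := hx i
  constructor
  · calc infDist x (frontier Q.set)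
        ≤ dist x (WithLp.toLp 2 (Function.update x.ofLp i (Q.a i))) :=
          infDist_le_dist_of_mem (Q.toLp_update_mem_frontier_set hx i (.inl rfl))
      _ = x i - Q.a i := by rw [EuclideanSpace.dist_toLp_update, abs_of_nonneg (by linarith)]
  · calc infDist x (frontier Q.set)
        ≤ dist x (WithLp.toLp 2 (Function.update x.ofLp i (Q.a i + Q.l))) :=
          infDist_le_dist_of_mem (Q.toLp_update_mem_frontier_set hx i (.inr rfl))
      _ = Q.a i + Q.l - x i := by
          rw [EuclideanSpace.dist_toLp_update, abs_of_neg (by linarith), neg_sub]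

lemma infDist_frontier_le_half (hd : 0 < d) (hx : x ∈ Q.set) :
    infDist x (frontier Q.set) ≤ Q.l / 2 := by
  obtain ⟨h₁, h₂⟩ := Q.infDist_frontier_le hx ⟨0, hd⟩
  linarith

lemma frontier_set_nonempty (hd : 0 < d) : (frontier Q.set).Nonempty := by
  have ha : WithLp.toLp 2 Q.a ∈ Q.set := fun i => ⟨le_rfl, lt_add_of_pos_right _ Q.l_pos⟩
  simpa using ⟨_, Q.toLp_update_mem_frontier_set ha ⟨0, hd⟩ (.inl rfl)⟩

lemma le_infDist_frontier_iff (hd : 0 < d) (hx : x ∈ Q.set) {s : ℝ} :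
    s ≤ infDist x (frontier Q.set) ↔ ∀ i, x i ∈ Icc (Q.a i + s) (Q.a i + Q.l - s) := by
  refine ⟨fun h i => ?_, fun h => (le_infDist (Q.frontier_set_nonempty hd)).mpr fun y hy => ?_⟩
  · obtain ⟨h₁, h₂⟩ := Q.infDist_frontier_le hx i
    constructor <;> linarith
  · have hy : ∃ i, y i ∉ Ioo (Q.a i) (Q.a i + Q.l) := by
      simpa [interior_set] using hy.2
    obtain ⟨i, hi⟩ := hy
    have := PiLp.dist_apply_le x y i
    rw [Real.dist_eq] at this
    rw [mem_Ioo, not_and_or, not_lt, not_lt] at hi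
    obtain ⟨h₁, h₂⟩ := h i
    rcases hi with hi | hi
    · linarith [le_abs_self (x i - y i)]
    · linarith [neg_abs_le (x i - y i)]

lemma infDist_frontier_pos (hd : 0 < d) (hx : x ∈ interior Q.set) :
    0 < infDist x (frontier Q.set) :=
  (isClosed_frontier.notMem_iff_infDist_pos (Q.frontier_set_nonempty hd)).mp
    fun h => h.2 hx

lemma volume_setOf_infDist_frontier_lt (hd : 0 < d) {s : ℝ} (hs : 0 < s) (hsl : 2 * s ≤ Q.l) :
    volume {x ∈ interior Q.set | infDist x (frontier Q.set) < s}
      = ENNReal.ofReal (Q.l ^ d - (Q.l - 2 * s) ^ d) := by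
  set C := {x : EuclideanSpace ℝ (Fin d) | ∀ i, x i ∈ Icc (Q.a i + s) (Q.a i + Q.l - s)}
  have hC : {x ∈ interior Q.set | infDist x (frontier Q.set) < s} = interior Q.set \ C := by
    ext x
    simp only [mem_ofPred_eq, mem_sdiff, C, ← not_le, and_congr_right_iff]
    intro hx
    rw [Q.le_infDist_frontier_iff hd (interior_subset hx)]
  have hCsub : C ⊆ interior Q.set := by
    intro x hx
    rw [interior_set]
    intro i
    obtain ⟨h₁, h₂⟩ := hx i
    constructor <;> linarith
  have hCvol : volume C = ENNReal.ofReal ((Q.l - 2 * s) ^ d) := by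
    rw [EuclideanSpace.volume_setOf_forall_mem]
    have hlen : ∀ i, Q.a i + Q.l - s - (Q.a i + s) = Q.l - 2 * s := fun i => by ring
    simp [Real.volume_Icc, hlen, ← ENNReal.ofReal_pow (sub_nonneg.mpr hsl)]
  have hCmeas : MeasurableSet C :=
    EuclideanSpace.measurableSet_setOf_forall_mem fun _ => measurableSet_Icc
  rw [hC, measure_sdiff hCsub hCmeas.nullMeasurableSet (by simp [hCvol]), volume_interior_set,
    hCvol, ENNReal.ofReal_sub _ (by positivity)]

lemma log_div_two_infDist_frontier_ae_nonneg (hd : 0 < d) :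
    0 ≤ᵐ[volume.restrict (interior Q.set)]
      fun x => log (Q.l / (2 * infDist x (frontier Q.set))) := by
  filter_upwards [ae_restrict_mem isOpen_interior.measurableSet] with x hx
  have hpos := Q.infDist_frontier_pos hd hx
  have hhalf := Q.infDist_frontier_le_half hd (interior_subset hx)
  exact log_nonneg ((one_le_div (by positivity)).mpr (by linarith))

lemma volume_setOf_lt_log_div_two_infDist_frontier_inter_interior (hd : 0 < d) {t : ℝ}
    (ht : 0 < t) :
    volume ({x | t < log (Q.l / (2 * infDist x (frontier Q.set)))} ∩ interior Q.set)
      = ENNReal.ofReal (Q.l ^ d * (1 - (1 - exp (-t)) ^ d)) := by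
  have hl := Q.l_pos
  have hset : {x | t < log (Q.l / (2 * infDist x (frontier Q.set)))} ∩ interior Q.set
      = {x ∈ interior Q.set | infDist x (frontier Q.set) < Q.l / 2 * exp (-t)} := by
    ext x
    rw [mem_inter_iff, and_comm]
    refine and_congr_right fun hx => ?_
    have hpos := Q.infDist_frontier_pos hd hx
    rw [mem_ofPred_eq, lt_log_iff_exp_lt (by positivity), lt_div_iff₀ (by positivity), exp_neg,
      ← div_eq_mul_inv, lt_div_iff₀ (exp_pos t)]
    constructor <;> intro h <;> linarith
  have hexp : exp (-t) ≤ 1 := exp_le_one_iff.mpr (by linarith)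
  rw [hset, Q.volume_setOf_infDist_frontier_lt hd (by positivity) (by nlinarith),
    show Q.l - 2 * (Q.l / 2 * exp (-t)) = Q.l * (1 - exp (-t)) by ring, mul_pow, mul_one_sub]

lemma lintegral_interior_log_div_two_infDist_frontier (hd : 0 < d) :
    ∫⁻ x in interior Q.set, ENNReal.ofReal (log (Q.l / (2 * infDist x (frontier Q.set))))
      = ENNReal.ofReal (Q.l ^ d * ∑ k ∈ Finset.range d, (1 : ℝ) / (k + 1)) := by
  rw [lintegral_eq_lintegral_meas_lt _ (Q.log_div_two_infDist_frontier_ae_nonneg hd) (by fun_prop),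
    setLIntegral_congr_fun measurableSet_Ioi fun t ht => by
      rw [Measure.restrict_apply' isOpen_interior.measurableSet,
        Q.volume_setOf_lt_log_div_two_infDist_frontier_inter_interior hd ht],
    ← ofReal_integral_eq_lintegral_ofReal
      ((integrableOn_Ioi_one_sub_one_sub_exp_neg_pow d).const_mul _),
    integral_const_mul, integral_Ioi_one_sub_one_sub_exp_neg_pow]
  filter_upwards [ae_restrict_mem measurableSet_Ioi] with t ht
  exact mul_nonneg (pow_nonneg Q.l_pos.le d) (one_sub_one_sub_exp_neg_pow_nonneg ht.le d)

lemma integrableOn_interior_log_div_two_infDist_frontier (hd : 0 < d) :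
    IntegrableOn (fun x => log (Q.l / (2 * infDist x (frontier Q.set)))) (interior Q.set) := by
  refine ⟨(by fun_prop : Measurable _).aestronglyMeasurable,
    (hasFiniteIntegral_iff_ofReal (Q.log_div_two_infDist_frontier_ae_nonneg hd)).mpr ?_⟩
  rw [Q.lintegral_interior_log_div_two_infDist_frontier hd]
  exact ENNReal.ofReal_lt_top

lemma integral_interior_log_div_two_infDist_frontier (hd : 0 < d) :
    ∫ x in interior Q.set, log (Q.l / (2 * infDist x (frontier Q.set)))
      = Q.l ^ d * ∑ k ∈ Finset.range d, (1 : ℝ) / (k + 1) := by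
  have hl := Q.l_pos
  rw [integral_eq_lintegral_of_nonneg_ae (Q.log_div_two_infDist_frontier_ae_nonneg hd)
    (by fun_prop : Measurable _).aestronglyMeasurable,
    Q.lintegral_interior_log_div_two_infDist_frontier hd, ENNReal.toReal_ofReal (by positivity)]

end Cube

/-- (1/|Q|) ∫_Q log(1/dist(x,∂Q)) dx = log(1/ℓ(Q)) + log 2 + (1 + 1/2 + ⋯ + 1/d). -/
theorem stmt1 {d : ℕ} (hd : 0 < d) (Q : Cube d) :
    (volume Q.set).toReal⁻¹ * ∫ x in Q.set, Real.log (1 / infDist x (frontier Q.set))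
      = Real.log (1 / Q.l) + (Real.log 2 + ∑ k ∈ Finset.range d, (1 : ℝ) / (k + 1)) := by
  have hl := Q.l_pos
  have hlog : EqOn (fun x => log (1 / infDist x (frontier Q.set)))
      (fun x => log (2 / Q.l) + log (Q.l / (2 * infDist x (frontier Q.set))))
      (interior Q.set) := by
    intro x hx
    have hpos := Q.infDist_frontier_pos hd hx
    dsimp only
    rw [← log_mul (by positivity) (by positivity)]
    congr 1
    field_simp
  rw [← setIntegral_congr_set (interior_ae_eq_of_null_frontier Q.volume_frontier_set),
    setIntegral_congr_fun isOpen_interior.measurableSet hlog,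
    integral_add (integrableOn_const (by simp [Q.volume_interior_set])).integrable
      (Q.integrableOn_interior_log_div_two_infDist_frontier hd).integrable,
    Q.integral_interior_log_div_two_infDist_frontier hd, setIntegral_const, measureReal_def,
    Q.volume_interior_set, Q.volume_set, ENNReal.toReal_ofReal (by positivity), smul_eq_mul,
    log_div two_ne_zero hl.ne', one_div, log_inv]
  field_simp
  ring
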